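/- The optimal-constant function Θ is locally Lipschitz: there exists C < ∞ depending only on the maps L_i such that for all e, e' ∈ (0,∞)⁴, |Θ(e') − Θ(e)| ≤ C · max_k(e_k + e'_k) · max_j |e_j − e'_j|. -/

import Mathlib

/-!
Λ(E) is the measure of `⋂ i, L i ⁻¹' E i`. A point of this set that is missed by
`⋂ i, L i ⁻¹' F i` has some `L i z ∈ E i ∆ F i` and `L (i + 1) z ∈ E (i + 1)`; since
`(L i, L (i + 1))` is a linear isomorphism onto `ℝ² × ℝ²`, such points form a set of measure
`c i · |E i ∆ F i| · |E (i + 1)|`. Hence `Λ(E) ≤ Λ(F) + C · M · m` when all sets have measure at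
most `M` and `|E i ∆ F i| ≤ m`. Every admissible family for `e'` can be resized to an admissible
family for `e` with `|E i ∆ F i| = |e' i - e i|` (intermediate values of `r ↦ |A ∩ B(0, r)|`),
which gives `Θ(e') ≤ Θ(e) + C · M · m`; exchanging `e` and `e'` finishes the proof.
-/

open MeasureTheory Set

noncomputable section

abbrev R2 := ℝ × ℝ
abbrev R4 := (ℝ × ℝ) × ℝ × ℝ

def Lam (L : Fin 4 → R4 →ₗ[ℝ] R2) (E : Fin 4 → Set R2) : ℝ :=
  ∫ z : R4, ∏ i, (E i).indicator (fun _ => (1 : ℝ)) (L i z)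

def Theta (L : Fin 4 → R4 →ₗ[ℝ] R2) (e : Fin 4 → ℝ) : ℝ :=
  sSup {t | ∃ E : Fin 4 → Set R2, (∀ i, MeasurableSet (E i)) ∧
    (∀ i, volume (E i) = ENNReal.ofReal (e i)) ∧ t = Lam L E}

open Metric
open scoped ENNReal NNReal symmDiff

lemma ContinuousOn.of_dist_le {α β γ : Type*} [PseudoMetricSpace α] [PseudoMetricSpace β]
    [PseudoMetricSpace γ] {f : α → β} {g : α → γ} {s : Set α} (hg : ContinuousOn g s)
    (hfg : ∀ x ∈ s, ∀ y ∈ s, dist (f x) (f y) ≤ dist (g x) (g y)) : ContinuousOn f s := by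
  rw [Metric.continuousOn_iff] at hg ⊢
  intro x hx ε hε
  obtain ⟨δ, hδ, hg⟩ := hg x hx ε hε
  exact ⟨δ, hδ, fun y hy hyx => (hfg y hy x hx).trans_lt (hg y hy hyx)⟩

section IntermediateMeasure

variable {E : Type*} [NormedAddCommGroup E] [NormedSpace ℝ E] [FiniteDimensional ℝ E]
  [MeasurableSpace E] (μ : Measure E) [μ.IsAddHaarMeasure]

lemma measure_inter_closedBall_ne_top (A : Set E) (t : ℝ) : μ (A ∩ closedBall 0 t) ≠ ∞ :=
  ((measure_mono inter_subset_right).trans_lt measure_closedBall_lt_top).ne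

variable [BorelSpace E]

lemma measureReal_inter_closedBall_sub_le (A : Set E) {s t : ℝ} (hst : s ≤ t) :
    μ.real (A ∩ closedBall 0 t) - μ.real (A ∩ closedBall 0 s) ≤
      μ.real (closedBall 0 t) - μ.real (closedBall 0 s) := by
  have hsub : closedBall (0 : E) s ⊆ closedBall 0 t := closedBall_subset_closedBall hst
  have hcover : A ∩ closedBall 0 t ⊆ (A ∩ closedBall 0 s) ∪ (closedBall 0 t \ closedBall 0 s) :=
    fun x hx => (em (x ∈ closedBall 0 s)).imp (fun h => ⟨hx.1, h⟩) (fun h => ⟨hx.2, h⟩)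
  have hfin : μ ((A ∩ closedBall 0 s) ∪ (closedBall 0 t \ closedBall 0 s)) ≠ ∞ :=
    ((measure_mono (union_subset (inter_subset_right.trans hsub) sdiff_subset)).trans_lt
      measure_closedBall_lt_top).ne
  have := (measureReal_mono hcover hfin).trans (measureReal_union_le _ _)
  rw [measureReal_sdiff hsub measurableSet_closedBall measure_closedBall_lt_top.ne] at this
  linarith

lemma continuousOn_measureReal_inter_closedBall (A : Set E) :
    ContinuousOn (fun t => μ.real (A ∩ closedBall 0 t)) (Ici 0) := by
  have hball : ContinuousOn (fun t => μ.real (closedBall (0 : E) t)) (Ici 0) :=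
    ((continuous_pow _).mul continuous_const).continuousOn.congr
      fun t ht => Measure.addHaar_real_closedBall' μ 0 ht
  have key : ∀ {s t : ℝ}, s ≤ t →
      dist (μ.real (A ∩ closedBall 0 s)) (μ.real (A ∩ closedBall 0 t)) ≤
        dist (μ.real (closedBall (0 : E) s)) (μ.real (closedBall 0 t)) := by
    intro s t hst
    have hA := measureReal_mono (inter_subset_inter_right A (closedBall_subset_closedBall hst))
      (measure_inter_closedBall_ne_top μ A t)
    have hB := measureReal_mono (μ := μ) (closedBall_subset_closedBall (x := (0 : E)) hst)
      measure_closedBall_lt_top.ne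
    rw [Real.dist_eq, Real.dist_eq, abs_sub_comm, abs_of_nonneg (by linarith), abs_sub_comm,
      abs_of_nonneg (by linarith)]
    exact measureReal_inter_closedBall_sub_le μ A hst
  refine hball.of_dist_le fun s _ t _ => ?_
  rcases le_total s t with hst | hts
  · exact key hst
  · exact (dist_comm _ _).trans_le ((key hts).trans_eq (dist_comm _ _))

variable [Nontrivial E]

lemma exists_subset_measure_eq {A : Set E} (hA : MeasurableSet A) {r : ℝ≥0∞} (hr : r ≤ μ A) :
    ∃ B ⊆ A, MeasurableSet B ∧ μ B = r := by
  rcases hr.eq_or_lt with rfl | hr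
  · exact ⟨A, subset_rfl, hA, rfl⟩
  have hlim : Filter.Tendsto (fun n : ℕ => μ (A ∩ closedBall 0 n)) Filter.atTop (nhds (μ A)) := by
    have := tendsto_measure_iUnion_atTop (μ := μ) fun m n hmn =>
      inter_subset_inter_right A (closedBall_subset_closedBall (x := (0 : E)) (Nat.cast_le.2 hmn))
    rwa [← inter_iUnion, iUnion_closedBall_nat, inter_univ] at this
  obtain ⟨n, hn⟩ := ((tendsto_order.1 hlim).1 r hr).exists
  have h0 : μ.real (A ∩ closedBall 0 0) = 0 := by
    rw [closedBall_zero, measureReal_def,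
      measure_mono_null inter_subset_right (measure_singleton 0), ENNReal.toReal_zero]
  have hmem : r.toReal ∈ Icc (μ.real (A ∩ closedBall 0 0)) (μ.real (A ∩ closedBall 0 (n : ℝ))) :=
    ⟨by rw [h0]; exact ENNReal.toReal_nonneg,
      ENNReal.toReal_mono (measure_inter_closedBall_ne_top μ A n) hn.le⟩
  obtain ⟨t, -, hμt⟩ := intermediate_value_Icc (Nat.cast_nonneg n)
    ((continuousOn_measureReal_inter_closedBall μ A).mono Icc_subset_Ici_self) hmem
  refine ⟨A ∩ closedBall 0 t, inter_subset_left, hA.inter measurableSet_closedBall, ?_⟩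
  exact (ENNReal.toReal_eq_toReal_iff' (measure_inter_closedBall_ne_top μ A t)
    (hn.trans_le le_top).ne).1 hμt

lemma exists_measure_eq_and_measure_symmDiff_eq {A : Set E} (hA : MeasurableSet A) {a b : ℝ}
    (ha : 0 ≤ a) (hb : 0 ≤ b) (hμA : μ A = ENNReal.ofReal a) :
    ∃ B, MeasurableSet B ∧ μ B = ENNReal.ofReal b ∧ μ (A ∆ B) = ENNReal.ofReal |a - b| := by
  rcases le_total b a with hba | hab
  · obtain ⟨B, hBA, hB, hμB⟩ := exists_subset_measure_eq μ hA (r := ENNReal.ofReal b)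
      (hμA ▸ ENNReal.ofReal_le_ofReal hba)
    refine ⟨B, hB, hμB, ?_⟩
    rw [symmDiff_of_ge hBA, measure_sdiff hBA hB.nullMeasurableSet (by simp [hμB]), hμA, hμB,
      ← ENNReal.ofReal_sub _ hb, abs_of_nonneg (sub_nonneg.2 hba)]
  · have hμAc : μ Aᶜ = ∞ := by
      rw [measure_compl hA (by simp [hμA]), measure_univ_of_isAddLeftInvariant, hμA,
        ENNReal.top_sub ENNReal.ofReal_ne_top]
    obtain ⟨S, hSA, hS, hμS⟩ := exists_subset_measure_eq μ hA.compl (r := ENNReal.ofReal (b - a))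
      (hμAc ▸ le_top)
    have hdisj : Disjoint A S := disjoint_compl_right.mono_right hSA
    refine ⟨A ∪ S, hA.union hS, ?_, ?_⟩
    · rw [measure_union hdisj hS, hμA, hμS, ← ENNReal.ofReal_add ha (sub_nonneg.2 hab),
        add_sub_cancel]
    · rw [symmDiff_of_le subset_union_left, union_sdiff_left, hdisj.symm.sdiff_eq_left, hμS,
        abs_sub_comm, abs_of_nonneg (sub_nonneg.2 hab)]

end IntermediateMeasure

lemma iInter_preimage_subset_union {ι X Y : Type*} (f : ι → X → Y) (E F : ι → Set Y) (σ : ι → ι) :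
    ⋂ i, f i ⁻¹' E i ⊆ (⋂ i, f i ⁻¹' F i) ∪ ⋃ i, f i ⁻¹' (E i ∆ F i) ∩ f (σ i) ⁻¹' E (σ i) := by
  intro x hx
  rw [mem_iInter] at hx
  by_cases hF : ∀ i, x ∈ f i ⁻¹' F i
  · exact Or.inl (mem_iInter.2 hF)
  · push Not at hF
    obtain ⟨i, hi⟩ := hF
    exact Or.inr (mem_iUnion.2 ⟨i, Or.inl ⟨hx i, hi⟩, hx (σ i)⟩)

lemma measure_iInter_preimage_le {ι X Y : Type*} [Fintype ι] [MeasurableSpace X] (μ : Measure X)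
    (f : ι → X → Y) (E F : ι → Set Y) (σ : ι → ι) :
    μ (⋂ i, f i ⁻¹' E i) ≤
      μ (⋂ i, f i ⁻¹' F i) + ∑ i, μ (f i ⁻¹' (E i ∆ F i) ∩ f (σ i) ⁻¹' E (σ i)) :=
  (measure_mono (iInter_preimage_subset_union f E F σ)).trans
    ((measure_union_le _ _).trans (add_le_add le_rfl (measure_iUnion_fintype_le μ _)))

section PairPreimage

variable {V E F : Type*} [NormedAddCommGroup V] [NormedSpace ℝ V] [FiniteDimensional ℝ V]
  [MeasurableSpace V] [BorelSpace V] [NormedAddCommGroup E] [NormedSpace ℝ E]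
  [FiniteDimensional ℝ E] [MeasurableSpace E] [BorelSpace E] [NormedAddCommGroup F]
  [NormedSpace ℝ F] [FiniteDimensional ℝ F] [MeasurableSpace F] [BorelSpace F]

lemma exists_measure_preimage_inter_preimage_eq (μ : Measure V) [μ.IsAddHaarMeasure]
    (ν : Measure E) [ν.IsAddHaarMeasure] (ρ : Measure F) [ρ.IsAddHaarMeasure]
    (f : V →ₗ[ℝ] E) (g : V →ₗ[ℝ] F) (hfg : Function.Bijective fun z => (f z, g z)) :
    ∃ c : ℝ≥0, ∀ A B, MeasurableSet A → MeasurableSet B →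
      μ (f ⁻¹' A ∩ g ⁻¹' B) = c * (ν A * ρ B) := by
  let T : V ≃L[ℝ] E × F := (LinearEquiv.ofBijective (f.prod g) hfg).toContinuousLinearEquiv
  obtain ⟨c, hc⟩ : ∃ c : ℝ≥0, μ.map T = c • ν.prod ρ :=
    ⟨_, Measure.isAddLeftInvariant_eq_smul _ _⟩
  refine ⟨c, fun A B hA hB => ?_⟩
  calc μ (f ⁻¹' A ∩ g ⁻¹' B) = μ.map T (A ×ˢ B) :=
        (Measure.map_apply T.continuous.measurable (hA.prod hB)).symm
    _ = _ := by rw [hc, Measure.smul_apply, Measure.prod_prod, ENNReal.smul_def, smul_eq_mul]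

end PairPreimage

instance isAddHaarMeasure_volume_prod {G H : Type*} [AddGroup G] [TopologicalSpace G]
    [MeasureSpace G] [MeasurableAdd G] [(volume : Measure G).IsAddHaarMeasure]
    [SFinite (volume : Measure G)] [AddGroup H] [TopologicalSpace H] [MeasureSpace H]
    [MeasurableAdd H] [(volume : Measure H).IsAddHaarMeasure] [SFinite (volume : Measure H)] :
    (volume : Measure (G × H)).IsAddHaarMeasure :=
  Measure.prod.instIsAddHaarMeasure _ _

lemma lam_eq_measureReal (L : Fin 4 → R4 →ₗ[ℝ] R2) {E : Fin 4 → Set R2}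
    (hE : ∀ i, MeasurableSet (E i)) : Lam L E = volume.real (⋂ i, L i ⁻¹' E i) := by
  have hmeas : MeasurableSet (⋂ i, L i ⁻¹' E i) :=
    .iInter fun i => (hE i).preimage (L i).continuous_of_finiteDimensional.measurable
  rw [Lam, ← integral_indicator_one hmeas]
  congr 1 with z
  by_cases hz : ∀ i, L i z ∈ E i
  · simp [hz]
  · push Not at hz
    obtain ⟨i, hi⟩ := hz
    rw [Finset.prod_eq_zero (Finset.mem_univ i) (indicator_of_notMem hi _),
      indicator_of_notMem (fun h : z ∈ ⋂ i, L i ⁻¹' E i => hi (mem_iInter.1 h i))]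

lemma lam_empty (L : Fin 4 → R4 →ₗ[ℝ] R2) : Lam L (fun _ => ∅) = 0 := by
  simp [Lam]

lemma exists_lam_le_lam_add (L : Fin 4 → R4 →ₗ[ℝ] R2)
    (hnd : ∀ i j, i ≠ j → Function.Bijective (fun z : R4 => (L i z, L j z))) :
    ∃ C : ℝ, 0 ≤ C ∧ ∀ (E F : Fin 4 → Set R2) (M m : ℝ), 0 ≤ M → 0 ≤ m →
      (∀ i, MeasurableSet (E i)) → (∀ i, MeasurableSet (F i)) →
      (∀ i, volume (E i) ≤ ENNReal.ofReal M) → (∀ i, volume (F i) ≤ ENNReal.ofReal M) →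
      (∀ i, volume (E i ∆ F i) ≤ ENNReal.ofReal m) → Lam L E ≤ Lam L F + C * M * m := by
  have hsucc : ∀ i : Fin 4, i ≠ i + 1 := by decide
  choose c hc using fun i => exists_measure_preimage_inter_preimage_eq volume volume volume
    (L i) (L (i + 1)) (hnd i (i + 1) (hsucc i))
  refine ⟨(∑ i, c i : ℝ≥0), NNReal.coe_nonneg _, fun E F M m hM hm hE hF hEM hFM hEF => ?_⟩
  have hterm : ∀ i, volume (L i ⁻¹' (E i ∆ F i) ∩ L (i + 1) ⁻¹' E (i + 1)) ≤
      c i * (ENNReal.ofReal m * ENNReal.ofReal M) := fun i => by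
    rw [hc i _ _ ((hE i).symmDiff (hF i)) (hE (i + 1))]
    gcongr
    exacts [hEF i, hEM _]
  have hFfin : volume (⋂ i, L i ⁻¹' F i) ≠ ∞ := by
    refine ((measure_mono (subset_inter (iInter_subset _ 0) (iInter_subset _ (0 + 1)))).trans_lt
      ?_).ne
    rw [hc 0 _ _ (hF 0) (hF (0 + 1))]
    exact ENNReal.mul_lt_top ENNReal.coe_lt_top (ENNReal.mul_lt_top
      ((hFM 0).trans_lt ENNReal.ofReal_lt_top) ((hFM (0 + 1)).trans_lt ENNReal.ofReal_lt_top))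
  have key : volume (⋂ i, L i ⁻¹' E i) ≤ volume (⋂ i, L i ⁻¹' F i) +
      (∑ i, c i : ℝ≥0) * (ENNReal.ofReal m * ENNReal.ofReal M) := by
    refine (measure_iInter_preimage_le volume (fun i => L i) E F (· + 1)).trans ?_
    rw [ENNReal.ofNNReal_finsetSum, Finset.sum_mul]
    exact add_le_add le_rfl (Finset.sum_le_sum fun i _ => hterm i)
  rw [lam_eq_measureReal L hE, lam_eq_measureReal L hF]
  calc volume.real (⋂ i, L i ⁻¹' E i)
      ≤ (volume (⋂ i, L i ⁻¹' F i) +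
          (∑ i, c i : ℝ≥0) * (ENNReal.ofReal m * ENNReal.ofReal M)).toReal :=
        ENNReal.toReal_mono (by finiteness) key
    _ = _ := by
      rw [ENNReal.toReal_add hFfin (by finiteness), ENNReal.toReal_mul, ENNReal.toReal_mul,
        ENNReal.coe_toReal, ENNReal.toReal_ofReal hm, ENNReal.toReal_ofReal hM, measureReal_def]
      ring

lemma exists_theta_le_theta_add (L : Fin 4 → R4 →ₗ[ℝ] R2)
    (hnd : ∀ i j, i ≠ j → Function.Bijective (fun z : R4 => (L i z, L j z))) :
    ∃ C : ℝ, 0 ≤ C ∧ ∀ (e e' : Fin 4 → ℝ) (M m : ℝ), (∀ i, 0 ≤ e i) → (∀ i, 0 ≤ e' i) →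
      (∀ i, e i ≤ M) → (∀ i, e' i ≤ M) → (∀ i, |e i - e' i| ≤ m) →
      Theta L e' ≤ Theta L e + C * M * m := by
  obtain ⟨C, hC, hlip⟩ := exists_lam_le_lam_add L hnd
  refine ⟨C, hC, fun e e' M m he he' heM he'M hm => ?_⟩
  have hM : 0 ≤ M := (he 0).trans (heM 0)
  have hm0 : 0 ≤ m := (abs_nonneg _).trans (hm 0)
  have hbdd : BddAbove {t | ∃ E : Fin 4 → Set R2, (∀ i, MeasurableSet (E i)) ∧
      (∀ i, volume (E i) = ENNReal.ofReal (e i)) ∧ t = Lam L E} := by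
    refine ⟨C * M * M, ?_⟩
    rintro _ ⟨E, hE, hμE, rfl⟩
    have hEM : ∀ i, volume (E i) ≤ ENNReal.ofReal M :=
      fun i => (hμE i).trans_le (ENNReal.ofReal_le_ofReal (heM i))
    simpa [lam_empty] using hlip E (fun _ => ∅) M M hM hM hE (fun _ => .empty) hEM (by simp)
      fun i => (symmDiff_bot (E i)).symm ▸ hEM i
  obtain ⟨E₀, hE₀, hμE₀⟩ : ∃ E : Fin 4 → Set R2, (∀ i, MeasurableSet (E i)) ∧
      ∀ i, volume (E i) = ENNReal.ofReal (e' i) := by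
    choose E _ hE hμE using fun i => exists_subset_measure_eq (volume : Measure R2) .univ
      (r := ENNReal.ofReal (e' i)) (by simp [measure_univ_of_isAddLeftInvariant])
    exact ⟨E, hE, hμE⟩
  refine csSup_le ⟨_, E₀, hE₀, hμE₀, rfl⟩ ?_
  rintro _ ⟨E, hE, hμE, rfl⟩
  choose F hF hμF hEF using fun i =>
    exists_measure_eq_and_measure_symmDiff_eq volume (hE i) (he' i) (he i) (hμE i)
  calc Lam L E ≤ Lam L F + C * M * m :=
        hlip E F M m hM hm0 hE hF
          (fun i => (hμE i).trans_le (ENNReal.ofReal_le_ofReal (he'M i)))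
          (fun i => (hμF i).trans_le (ENNReal.ofReal_le_ofReal (heM i)))
          (fun i => (hEF i).trans_le
            (ENNReal.ofReal_le_ofReal (abs_sub_comm (e i) (e' i) ▸ hm i)))
    _ ≤ Theta L e + C * M * m := by
      gcongr
      exact le_csSup hbdd ⟨F, hF, hμF, rfl⟩

theorem theta_locally_lipschitz_general (L : Fin 4 → R4 →ₗ[ℝ] R2)
    (hnd : ∀ i j, i ≠ j → Function.Bijective (fun z : R4 => (L i z, L j z))) :
    ∃ C : ℝ, 0 ≤ C ∧ ∀ e e' : Fin 4 → ℝ, (∀ i, 0 < e i) → (∀ i, 0 < e' i) →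
      |Theta L e' - Theta L e| ≤
        C * (⨆ k, (e k + e' k)) * ⨆ j, |e j - e' j| := by
  obtain ⟨C, hC, hθ⟩ := exists_theta_le_theta_add L hnd
  refine ⟨C, hC, fun e e' he he' => ?_⟩
  have hM : ∀ k, e k + e' k ≤ ⨆ k, (e k + e' k) := le_ciSup (Finite.bddAbove_range _)
  have hm : ∀ j, |e j - e' j| ≤ ⨆ j, |e j - e' j| := le_ciSup (Finite.bddAbove_range _)
  have heM : ∀ k, e k ≤ ⨆ k, (e k + e' k) := fun k => by linarith [hM k, he' k]
  have he'M : ∀ k, e' k ≤ ⨆ k, (e k + e' k) := fun k => by linarith [hM k, he k]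
  have h₁ := hθ e e' _ _ (fun i => (he i).le) (fun i => (he' i).le) heM he'M hm
  have h₂ := hθ e' e _ _ (fun i => (he' i).le) (fun i => (he i).le) he'M heM
    fun j => abs_sub_comm (e j) (e' j) ▸ hm j
  rw [abs_sub_le_iff]
  constructor <;> linarith

/-- Θ is locally Lipschitz:
|Θ(e') − Θ(e)| ≤ C · maxₖ(eₖ + e'ₖ) · maxⱼ|eⱼ − e'ⱼ|. -/
theorem theta_locally_lipschitz (L : Fin 4 → R4 →ₗ[ℝ] R2)
    (hsurj : ∀ i, Function.Surjective (L i))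
    (hnd : ∀ i j, i ≠ j → Function.Bijective (fun z : R4 => (L i z, L j z))) :
    ∃ C : ℝ, 0 ≤ C ∧ ∀ e e' : Fin 4 → ℝ, (∀ i, 0 < e i) → (∀ i, 0 < e' i) →
      |Theta L e' - Theta L e| ≤
        C * (⨆ k, (e k + e' k)) * ⨆ j, |e j - e' j| :=
  theta_locally_lipschitz_general L hnd

end
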